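/- If r = (2β+1)/γ > 1 (with β, γ > 0), then the admissibility integral is finite with value (1/(2π)) ∫_{ℝ²} ‖ν‖^{−2γ} |V_r(ν)|² d²ν = 4π/(r−1); if r ≤ 1 the integral diverges. -/

import Mathlib

/- Geometric anisotropy: common definitions -/
noncomputable section
open MeasureTheory Real Set

/-- Euclidean norm of a vector in ℝ². -/
def nrm (v : Fin 2 → ℝ) : ℝ := Real.sqrt (v 0 ^ 2 + v 1 ^ 2)

/-- Euclidean inner product on ℝ². -/
def dot2 (v w : Fin 2 → ℝ) : ℝ := v 0 * w 0 + v 1 * w 1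

/-- Rotation matrix through angle θ. -/
def rot (θ : ℝ) : Matrix (Fin 2) (Fin 2) ℝ :=
  !![Real.cos θ, -Real.sin θ; Real.sin θ, Real.cos θ]

/-- 1-D Morse profile, with r = (2β+1)/γ. -/
def V1D (β γ : ℝ) (ω : ℝ) : ℝ :=
  if 0 < ω then
    (2 ^ (((2 * β + 1) / γ + 1) / 2) * Real.sqrt (π * γ) /
      Real.sqrt (Real.Gamma ((2 * β + 1) / γ))) * ω ^ β * Real.exp (-(ω ^ γ))
  else 0

/-- Radial fiducial vector V_r(ν) = ‖ν‖^{(γ−1)/2} V₁D(‖ν‖). -/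
def Vrad (β γ : ℝ) (ν : Fin 2 → ℝ) : ℝ := nrm ν ^ ((γ - 1) / 2) * V1D β γ (nrm ν)

namespace AdmissibilityAux

open scoped ENNReal

lemma nrm_eq_norm (x : EuclideanSpace ℝ (Fin 2)) : nrm x = ‖x‖ := by
  rw [EuclideanSpace.norm_eq, Fin.sum_univ_two]
  simp [nrm, Real.norm_eq_abs, sq_abs]

lemma measurable_nrm : Measurable nrm := by
  unfold nrm
  exact (((measurable_pi_apply 0).pow_const 2).add
    ((measurable_pi_apply 1).pow_const 2)).sqrt

lemma measurable_V1D (β γ : ℝ) : Measurable (V1D β γ) := by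
  unfold V1D
  exact Measurable.ite measurableSet_Ioi
    ((measurable_const.mul (measurable_id.pow measurable_const)).mul
      ((measurable_id.pow measurable_const).neg.exp)) measurable_const

lemma toSphere_univ :
    (volume : Measure (EuclideanSpace ℝ (Fin 2))).toSphere Set.univ
      = ENNReal.ofReal (2 * π) := by
  rw [Measure.toSphere_apply_univ, finrank_euclideanSpace_fin,
    EuclideanSpace.volume_ball]
  simp only [Fintype.card_fin]
  have : Real.Gamma ((2 : ℕ) / 2 + 1 : ℝ) = 1 := by
    norm_num [Real.Gamma_two]
  rw [this, div_one, Real.sq_sqrt Real.pi_nonneg,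
    ENNReal.ofReal_mul (by norm_num : (0:ℝ) ≤ 2)]
  norm_num

set_option maxHeartbeats 1000000 in
lemma lintegral_norm_E2 (g : ℝ → ℝ≥0∞) (hg : Measurable g) :
    ∫⁻ x : EuclideanSpace ℝ (Fin 2), g ‖x‖
      = ENNReal.ofReal (2 * π) * ∫⁻ y in Ioi (0:ℝ), ENNReal.ofReal y * g y := by
  set E := EuclideanSpace ℝ (Fin 2) with hE
  have hd : Module.finrank ℝ E = 2 := finrank_euclideanSpace_fin
  have hmp := (volume : Measure E).measurePreserving_homeomorphUnitSphereProd
  have hG : Measurable fun z : Metric.sphere (0 : E) 1 × Ioi (0:ℝ) => g (z.2 : ℝ) :=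
    hg.comp (measurable_subtype_coe.comp measurable_snd)
  have hG2 : Measurable fun y : Ioi (0:ℝ) => g (y : ℝ) := hg.comp measurable_subtype_coe
  have h1 : ∫⁻ x : E, g ‖x‖ = ∫⁻ x in ({0}ᶜ : Set E), g ‖x‖ := by
    rw [restrict_compl_singleton]
  have h2 : ∫⁻ x in ({0}ᶜ : Set E), g ‖x‖
      = ∫⁻ x : ({0}ᶜ : Set E), g ‖(x : E)‖ ∂((volume : Measure E).comap (↑)) :=
    (lintegral_subtype_comap (MeasurableSet.compl (measurableSet_singleton 0))
      (fun x => g ‖x‖)).symm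
  have h3 : ∫⁻ x : ({0}ᶜ : Set E), g ‖(x : E)‖ ∂((volume : Measure E).comap (↑))
      = ∫⁻ z : Metric.sphere (0 : E) 1 × Ioi (0:ℝ), g (z.2 : ℝ)
          ∂((volume : Measure E).toSphere.prod
            (Measure.volumeIoiPow (Module.finrank ℝ E - 1))) := by
    rw [← hmp.lintegral_comp hG]
    refine lintegral_congr fun x => ?_
    simp
  have h4 : ∫⁻ z : Metric.sphere (0 : E) 1 × Ioi (0:ℝ), g (z.2 : ℝ)
          ∂((volume : Measure E).toSphere.prod
            (Measure.volumeIoiPow (Module.finrank ℝ E - 1)))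
      = (∫⁻ y : Ioi (0:ℝ), g (y : ℝ) ∂(Measure.volumeIoiPow (Module.finrank ℝ E - 1)))
          * (volume : Measure E).toSphere Set.univ := by
    rw [lintegral_prod _ hG.aemeasurable]
    simp [lintegral_const]
  have h5 : ∫⁻ y : Ioi (0:ℝ), g (y : ℝ) ∂(Measure.volumeIoiPow (Module.finrank ℝ E - 1))
      = ∫⁻ y in Ioi (0:ℝ), ENNReal.ofReal y * g y := by
    rw [hd, Measure.volumeIoiPow,
      lintegral_withDensity_eq_lintegral_mul _
        ((measurable_subtype_coe.pow_const _).ennreal_ofReal) hG2]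
    simp only [Pi.mul_apply]
    rw [lintegral_subtype_comap measurableSet_Ioi
      (fun y : ℝ => ENNReal.ofReal (y ^ (2 - 1)) * g y)]
    simp
  rw [h1, h2, h3, h4, h5, toSphere_univ, mul_comm]

lemma integrableOn_rpow_mul_exp_neg_mul_rpow_Ioi {p q b : ℝ} (hp : 0 < p) (hq : -1 < q)
    (hb : 0 < b) :
    IntegrableOn (fun x : ℝ => x ^ q * Real.exp (-b * x ^ p)) (Ioi (0:ℝ)) := by
  set s : ℝ := (q + 1) / p - 1 with hs
  have hs1 : 0 < s + 1 := by
    rw [hs]; have : 0 < (q + 1) / p := div_pos (by linarith) hp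
    linarith
  have h₁ : IntegrableOn (fun u : ℝ => Real.exp (-u) * u ^ (s + 1 - 1)) (Ioi (0:ℝ)) :=
    Real.GammaIntegral_convergent hs1
  have h₂ : IntegrableOn (fun u : ℝ => Real.exp (-(b * u)) * (b * u) ^ s) (Ioi (0:ℝ)) := by
    have := (integrableOn_Ioi_comp_mul_left_iff
      (fun u : ℝ => Real.exp (-u) * u ^ s) 0 hb).mpr
    rw [mul_zero] at this
    apply this
    simpa using h₁
  have h₃ : IntegrableOn (fun u : ℝ => u ^ s * Real.exp (-(b * u))) (Ioi (0:ℝ)) := by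
    have h4 := h₂.const_mul (b ^ (-s : ℝ))
    refine IntegrableOn.congr_fun h4 (fun u hu => ?_) measurableSet_Ioi
    have hu0 : 0 < u := hu
    rw [Real.mul_rpow hb.le hu0.le]
    have hbb : b ^ (-s : ℝ) * b ^ s = 1 := by
      rw [← Real.rpow_add hb, neg_add_cancel, Real.rpow_zero]
    calc b ^ (-s : ℝ) * (Real.exp (-(b * u)) * (b ^ s * u ^ s))
        = (b ^ (-s : ℝ) * b ^ s) * (u ^ s * Real.exp (-(b * u))) := by ring
      _ = u ^ s * Real.exp (-(b * u)) := by rw [hbb, one_mul]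
  have h₅ := (integrableOn_Ioi_comp_rpow_iff'
    (fun u : ℝ => u ^ s * Real.exp (-(b * u))) (p := p) hp.ne').mpr h₃
  refine h₅.congr_fun (fun x hx => ?_) measurableSet_Ioi
  have hx0 : 0 < x := hx
  have hxp : 0 < x ^ p := Real.rpow_pos_of_pos hx0 p
  have hpq : p - 1 + p * s = q := by rw [hs]; field_simp; ring
  dsimp only; rw [smul_eq_mul, ← Real.rpow_mul hx0.le, ← mul_assoc, ← Real.rpow_add hx0, hpq, neg_mul]

lemma volume_ball_E2 :
    (volume : Measure (EuclideanSpace ℝ (Fin 2))) (Metric.ball 0 1) = ENNReal.ofReal π := by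
  rw [EuclideanSpace.volume_ball]
  simp only [Fintype.card_fin]
  have : Real.Gamma ((2 : ℕ) / 2 + 1 : ℝ) = 1 := by norm_num [Real.Gamma_two]
  rw [this, div_one, Real.sq_sqrt Real.pi_nonneg]
  simp

lemma lintegral_radial (g : ℝ → ℝ≥0∞) (hg : Measurable g) :
    ∫⁻ ν : Fin 2 → ℝ, g (nrm ν)
      = ENNReal.ofReal (2 * π) * ∫⁻ y in Ioi (0:ℝ), ENNReal.ofReal y * g y := by
  rw [← lintegral_norm_E2 g hg]
  rw [← (EuclideanSpace.volume_preserving_symm_measurableEquiv_toLp (Fin 2)).lintegral_comp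
    (show Measurable fun ν : Fin 2 → ℝ => g (nrm ν) from hg.comp measurable_nrm)]
  refine lintegral_congr fun x => ?_
  rw [show nrm ((MeasurableEquiv.toLp 2 (Fin 2 → ℝ)).symm x) = nrm x from rfl, nrm_eq_norm]

lemma integral_radial (f : ℝ → ℝ) :
    ∫ ν : Fin 2 → ℝ, f (nrm ν) = (2 * π) * ∫ y in Ioi (0:ℝ), y * f y := by
  have h0 : ∫ ν : Fin 2 → ℝ, f (nrm ν) = ∫ x : EuclideanSpace ℝ (Fin 2), f ‖x‖ := by
    rw [← (EuclideanSpace.volume_preserving_symm_measurableEquiv_toLp (Fin 2)).integral_comp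
      (MeasurableEquiv.measurableEmbedding _) (fun ν : Fin 2 → ℝ => f (nrm ν))]
    refine integral_congr_ae (Filter.Eventually.of_forall fun x => ?_)
    show f (nrm ((MeasurableEquiv.toLp 2 (Fin 2 → ℝ)).symm x)) = f ‖x‖
    rw [show nrm ((MeasurableEquiv.toLp 2 (Fin 2 → ℝ)).symm x) = nrm x from rfl, nrm_eq_norm]
  have hball : (volume : Measure (EuclideanSpace ℝ (Fin 2))).real (Metric.ball 0 1) = π := by
    rw [measureReal_def, volume_ball_E2, ENNReal.toReal_ofReal Real.pi_nonneg]
  rw [h0, integral_fun_norm_addHaar (volume : Measure (EuclideanSpace ℝ (Fin 2))) f,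
    finrank_euclideanSpace_fin, hball]
  simp only [nsmul_eq_mul, smul_eq_mul, Nat.cast_ofNat, pow_one]
  norm_num
  ring

/-- The squared-profile constant. -/
def C0 (β γ : ℝ) : ℝ :=
  2 ^ (((2 * β + 1) / γ + 1) / 2) * Real.sqrt (π * γ) /
    Real.sqrt (Real.Gamma ((2 * β + 1) / γ))

/-- The radial profile of the admissibility integrand. -/
def f0 (β γ : ℝ) (t : ℝ) : ℝ := t ^ (-(2 * γ)) * (t ^ ((γ - 1) / 2) * V1D β γ t) ^ 2

lemma measurable_f0 (β γ : ℝ) : Measurable (f0 β γ) :=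
  (measurable_id.pow measurable_const).mul
    (((measurable_id.pow measurable_const).mul (measurable_V1D β γ)).pow measurable_const)

lemma f0_nonneg (β γ : ℝ) (t : ℝ) : 0 ≤ f0 β γ t := by
  rcases le_or_gt 0 t with h | h
  · exact mul_nonneg (Real.rpow_nonneg h _) (sq_nonneg _)
  · have hz : V1D β γ t = 0 := by rw [V1D, if_neg (not_lt.2 h.le)]
    simp [f0, hz]

lemma f0_eq (β γ : ℝ) {t : ℝ} (ht : 0 < t) :
    f0 β γ t = (C0 β γ) ^ 2 * (t ^ (2 * β - γ - 1) * Real.exp (-2 * t ^ γ)) := by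
  have hrp : ∀ a b : ℝ, t ^ a * t ^ b = t ^ (a + b) := fun a b => (Real.rpow_add ht a b).symm
  have hc : (2 ^ (((2 * β + 1) / γ + 1) / 2) * Real.sqrt (π * γ) /
      Real.sqrt (Real.Gamma ((2 * β + 1) / γ))) = C0 β γ := rfl
  rw [f0, V1D, if_pos ht, hc]
  calc t ^ (-(2 * γ)) * (t ^ ((γ - 1) / 2) * (C0 β γ * t ^ β * Real.exp (-(t ^ γ)))) ^ 2
      = (C0 β γ) ^ 2 * (t ^ (-(2 * γ)) * (t ^ ((γ - 1) / 2) * t ^ ((γ - 1) / 2)) * (t ^ β * t ^ β)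
          * (Real.exp (-(t ^ γ)) * Real.exp (-(t ^ γ)))) := by ring
    _ = (C0 β γ) ^ 2 * (t ^ (-(2 * γ) + ((γ - 1) / 2 + (γ - 1) / 2) + (β + β))
          * Real.exp (-(t ^ γ) + -(t ^ γ))) := by
        rw [hrp ((γ - 1) / 2) ((γ - 1) / 2), hrp (-(2 * γ)) ((γ - 1) / 2 + (γ - 1) / 2),
          hrp β β, hrp (-(2 * γ) + ((γ - 1) / 2 + (γ - 1) / 2)) (β + β), ← Real.exp_add]
    _ = (C0 β γ) ^ 2 * (t ^ (2 * β - γ - 1) * Real.exp (-2 * t ^ γ)) := by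
        rw [show -(2 * γ) + ((γ - 1) / 2 + (γ - 1) / 2) + (β + β) = 2 * β - γ - 1 by ring,
          show -(t ^ γ) + -(t ^ γ) = -2 * t ^ γ by ring]

end AdmissibilityAux

open AdmissibilityAux in
set_option maxHeartbeats 1000000 in
/-- if `r = (2β+1)/γ > 1` then the admissibility integral is finite with value
`(1/(2π)) ∫ ‖ν‖^{−2γ} |V_r(ν)|² d²ν = 4π/(r−1)`; if `r ≤ 1` the integral diverges. -/
theorem admissibility_integral (β γ : ℝ) (hβ : 0 < β) (hγ : 0 < γ)
    (r : ℝ) (hr : r = (2 * β + 1) / γ) :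
    (1 < r →
      MeasureTheory.Integrable
          (fun ν : Fin 2 → ℝ => nrm ν ^ (-(2 * γ)) * (Vrad β γ ν) ^ 2)
        ∧ (1 / (2 * π)) * ∫ ν : Fin 2 → ℝ, nrm ν ^ (-(2 * γ)) * (Vrad β γ ν) ^ 2
          = 4 * π / (r - 1))
    ∧ (r ≤ 1 →
      ¬ MeasureTheory.Integrable
          (fun ν : Fin 2 → ℝ => nrm ν ^ (-(2 * γ)) * (Vrad β γ ν) ^ 2)) := by
  have hΓpos : 0 < Real.Gamma ((2 * β + 1) / γ) := Real.Gamma_pos_of_pos (by positivity)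
  have hC0pos : 0 < C0 β γ :=
    div_pos (mul_pos (Real.rpow_pos_of_pos two_pos _)
      (Real.sqrt_pos.2 (by positivity))) (Real.sqrt_pos.2 hΓpos)
  have hF : (fun ν : Fin 2 → ℝ => nrm ν ^ (-(2 * γ)) * (Vrad β γ ν) ^ 2)
      = fun ν : Fin 2 → ℝ => f0 β γ (nrm ν) := rfl
  -- lintegral identity
  have hlint : ∫⁻ ν : Fin 2 → ℝ, ENNReal.ofReal (f0 β γ (nrm ν))
      = ENNReal.ofReal (2 * π) * ∫⁻ y in Ioi (0:ℝ), ENNReal.ofReal (y * f0 β γ y) := by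
    rw [lintegral_radial _ (measurable_f0 β γ).ennreal_ofReal]
    congr 1
    refine setLIntegral_congr_fun measurableSet_Ioi (fun y hy => ?_)
    rw [ENNReal.ofReal_mul (le_of_lt hy)]
  have hIntIff : Integrable (fun ν : Fin 2 → ℝ => f0 β γ (nrm ν))
      ↔ (∫⁻ y in Ioi (0:ℝ), ENNReal.ofReal (y * f0 β γ y)) < ⊤ := by
    constructor
    · intro h
      have h2 := h.hasFiniteIntegral
      rw [hasFiniteIntegral_iff_ofReal (ae_of_all _ fun ν => f0_nonneg β γ (nrm ν)),
        hlint] at h2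
      by_contra htop
      rw [not_lt, top_le_iff] at htop
      rw [htop, ENNReal.mul_top
        (ENNReal.ofReal_pos.2 (by positivity)).ne'] at h2
      exact absurd h2 (lt_irrefl ⊤)
    · intro h
      refine ⟨((measurable_f0 β γ).comp measurable_nrm).aestronglyMeasurable, ?_⟩
      rw [hasFiniteIntegral_iff_ofReal (ae_of_all _ fun ν => f0_nonneg β γ (nrm ν)), hlint]
      exact ENNReal.mul_lt_top ENNReal.ofReal_lt_top h
  have hIoiIff : IntegrableOn (fun y : ℝ => y * f0 β γ y) (Ioi (0:ℝ))
      ↔ (∫⁻ y in Ioi (0:ℝ), ENNReal.ofReal (y * f0 β γ y)) < ⊤ := by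
    have hnn : 0 ≤ᵐ[volume.restrict (Ioi (0:ℝ))] fun y : ℝ => y * f0 β γ y := by
      filter_upwards [ae_restrict_mem measurableSet_Ioi] with y hy
      exact mul_nonneg (le_of_lt hy) (f0_nonneg β γ y)
    constructor
    · intro h
      have h2 := h.hasFiniteIntegral
      rwa [hasFiniteIntegral_iff_ofReal hnn] at h2
    · intro h
      refine ⟨(measurable_id.mul (measurable_f0 β γ)).aestronglyMeasurable, ?_⟩
      rwa [hasFiniteIntegral_iff_ofReal hnn]
  constructor
  · -- convergent case
    intro h1
    have ht : 0 < r - 1 := by linarith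
    have hq : (-1:ℝ) < 2 * β - γ := by
      rw [hr] at h1
      have := (one_lt_div hγ).mp h1
      linarith
    have hg2 : IntegrableOn (fun y : ℝ => y * f0 β γ y) (Ioi (0:ℝ)) := by
      have base := (integrableOn_rpow_mul_exp_neg_mul_rpow_Ioi (p := γ) (q := 2 * β - γ)
        (b := 2) hγ hq two_pos).const_mul ((C0 β γ) ^ 2)
      refine IntegrableOn.congr_fun base (fun y hy => ?_) measurableSet_Ioi
      have hy0 : 0 < y := hy
      rw [f0_eq β γ hy0,
        show y * ((C0 β γ) ^ 2 * (y ^ (2 * β - γ - 1) * Real.exp (-2 * y ^ γ)))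
          = (C0 β γ) ^ 2 * ((y ^ (1:ℝ) * y ^ (2 * β - γ - 1)) * Real.exp (-2 * y ^ γ))
          from by rw [Real.rpow_one]; ring,
        ← Real.rpow_add hy0, show (1:ℝ) + (2 * β - γ - 1) = 2 * β - γ from by ring]
    refine ⟨by rw [hF]; exact hIntIff.mpr (hIoiIff.mp hg2), ?_⟩
    -- value
    have hr1 : (2 * β - γ + 1) / γ = r - 1 := by rw [hr]; field_simp; ring
    have hval : ∫ y in Ioi (0:ℝ), y * f0 β γ y
        = (C0 β γ) ^ 2 * (2 ^ (-(r - 1) : ℝ) * (1 / γ) * Real.Gamma (r - 1)) := by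
      rw [setIntegral_congr_fun measurableSet_Ioi (fun y (hy : y ∈ Ioi (0:ℝ)) => by
        have hy0 : 0 < y := hy
        show y * f0 β γ y = (C0 β γ) ^ 2 * (y ^ (2 * β - γ : ℝ) * Real.exp (-2 * y ^ γ))
        rw [f0_eq β γ hy0,
          show y * ((C0 β γ) ^ 2 * (y ^ (2 * β - γ - 1) * Real.exp (-2 * y ^ γ)))
            = (C0 β γ) ^ 2 * ((y ^ (1:ℝ) * y ^ (2 * β - γ - 1)) * Real.exp (-2 * y ^ γ))
            from by rw [Real.rpow_one]; ring,
          ← Real.rpow_add hy0,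
          show (1:ℝ) + (2 * β - γ - 1) = 2 * β - γ from by ring] :
        EqOn (fun y : ℝ => y * f0 β γ y)
          (fun y : ℝ => (C0 β γ) ^ 2 * (y ^ (2 * β - γ) * Real.exp (-2 * y ^ γ))) (Ioi 0))]
      rw [MeasureTheory.integral_const_mul, integral_rpow_mul_exp_neg_mul_rpow hγ hq two_pos]
      rw [neg_div, hr1]
    have hA : 0 < Real.Gamma (r - 1) := Real.Gamma_pos_of_pos ht
    have hΓr : Real.Gamma ((2 * β + 1) / γ) = (r - 1) * Real.Gamma (r - 1) := by
      calc Real.Gamma ((2 * β + 1) / γ) = Real.Gamma (r - 1 + 1) := by rw [← hr]; ring_nf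
        _ = (r - 1) * Real.Gamma (r - 1) := Real.Gamma_add_one ht.ne'
    have hC0sq : (C0 β γ) ^ 2
        = 2 ^ ((2 * β + 1) / γ + 1 : ℝ) * (π * γ) / Real.Gamma ((2 * β + 1) / γ) := by
      have h2a : ((2:ℝ) ^ (((2 * β + 1) / γ + 1) / 2 : ℝ)) ^ 2
          = 2 ^ ((2 * β + 1) / γ + 1 : ℝ) := by
        rw [sq, ← Real.rpow_add two_pos]
        congr 1; ring
      show (2 ^ (((2 * β + 1) / γ + 1) / 2 : ℝ) * Real.sqrt (π * γ) /
          Real.sqrt (Real.Gamma ((2 * β + 1) / γ))) ^ 2 = _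
      rw [div_pow, mul_pow, h2a, Real.sq_sqrt (by positivity : (0:ℝ) ≤ π * γ),
        Real.sq_sqrt hΓpos.le]
    have hC2 : (C0 β γ) ^ 2 * ((r - 1) * Real.Gamma (r - 1)) = 2 ^ (r + 1 : ℝ) * (π * γ) := by
      rw [hC0sq, hΓr, show (2 * β + 1) / γ + 1 = r + 1 from by rw [hr]]
      exact div_mul_cancel₀ _ (mul_ne_zero ht.ne' hA.ne')
    have h24 : (2:ℝ) ^ (r + 1 : ℝ) * 2 ^ (-(r - 1) : ℝ) = 4 := by
      rw [← Real.rpow_add two_pos, show r + 1 + -(r - 1) = (2:ℝ) by ring]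
      have h := Real.rpow_natCast (2:ℝ) 2
      norm_num at h
      linarith
    rw [hF, integral_radial (f0 β γ), hval]
    have hπ : (π:ℝ) ≠ 0 := Real.pi_ne_zero
    calc (1 / (2 * π)) * (2 * π * ((C0 β γ) ^ 2
            * (2 ^ (-(r - 1) : ℝ) * (1 / γ) * Real.Gamma (r - 1))))
        = ((C0 β γ) ^ 2 * ((r - 1) * Real.Gamma (r - 1))) * 2 ^ (-(r - 1) : ℝ)
            / (γ * (r - 1)) := by
          field_simp
      _ = 2 ^ (r + 1 : ℝ) * (π * γ) * 2 ^ (-(r - 1) : ℝ) / (γ * (r - 1)) := by rw [hC2]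
      _ = ((2:ℝ) ^ (r + 1 : ℝ) * 2 ^ (-(r - 1) : ℝ)) * π / (r - 1) := by
          field_simp
      _ = 4 * π / (r - 1) := by rw [h24]
  · -- divergent case
    intro h2 hInt
    rw [hF] at hInt
    have hfin := hIoiIff.mpr (hIntIff.mp hInt)
    have hfin01 : IntegrableOn (fun y : ℝ => y * f0 β γ y) (Ioo (0:ℝ) 1) :=
      hfin.mono_set Ioo_subset_Ioi_self
    have hIntPow : IntegrableOn (fun y : ℝ => y ^ (2 * β - γ : ℝ)) (Ioo (0:ℝ) 1) := by
      refine Integrable.mono' (hfin01.const_mul (Real.exp 2 / (C0 β γ) ^ 2))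
        (measurable_id.pow measurable_const).aestronglyMeasurable ?_
      filter_upwards [ae_restrict_mem measurableSet_Ioo] with y hy
      have hy0 : 0 < y := hy.1
      have hy1 : y ≤ 1 := hy.2.le
      have hyg : y ^ γ ≤ 1 := Real.rpow_le_one hy0.le hy1 hγ.le
      have hval : y * f0 β γ y
          = (C0 β γ) ^ 2 * (y ^ (2 * β - γ : ℝ) * Real.exp (-2 * y ^ γ)) := by
        rw [f0_eq β γ hy0,
          show y * ((C0 β γ) ^ 2 * (y ^ (2 * β - γ - 1) * Real.exp (-2 * y ^ γ)))
            = (C0 β γ) ^ 2 * ((y ^ (1:ℝ) * y ^ (2 * β - γ - 1)) * Real.exp (-2 * y ^ γ))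
            from by rw [Real.rpow_one]; ring,
          ← Real.rpow_add hy0, show (1:ℝ) + (2 * β - γ - 1) = 2 * β - γ from by ring]
      rw [Real.norm_eq_abs, abs_of_nonneg (Real.rpow_nonneg hy0.le _), hval]
      have hc2 : (0:ℝ) < (C0 β γ) ^ 2 := by positivity
      rw [show Real.exp 2 / (C0 β γ) ^ 2 * ((C0 β γ) ^ 2
          * (y ^ (2 * β - γ : ℝ) * Real.exp (-2 * y ^ γ)))
          = (Real.exp 2 * Real.exp (-2 * y ^ γ)) * y ^ (2 * β - γ : ℝ)
          from by field_simp, ← Real.exp_add]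
      refine le_mul_of_one_le_left (Real.rpow_nonneg hy0.le _) ?_
      rw [← Real.exp_zero]
      apply Real.exp_le_exp.2
      nlinarith
    have := (intervalIntegral.integrableOn_Ioo_rpow_iff one_pos).mp hIntPow
    have : 1 < r := by
      rw [hr]
      rw [one_lt_div hγ]
      linarith
    linarith
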